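/- Let 1 ≤ m ≤ n be integers and N = m+n. The m-signature of an edge path is independent of the path: for any two edge paths (i,j) and (i′,j′) with 1 ≤ i ≤ j ≤ N−1 and 1 ≤ i′ ≤ j′ ≤ N−1, one has σ(i,j) = σ(i′,j′). Consequently every MacMahon factor M(Q_i⋯Q_j, q) appears with the same exponent in the total Donaldson–Thomas partition function of C_{m,n}. -/
import Mathlib


/-- The edge sign `τ_T(l)`: `+1` if `l ∈ T ↔ l+1 ∈ T`, and `-1` otherwise. -/
def edgeSign (T : Finset ℕ) (l : ℕ) : ℤ :=
  if (l ∈ T ↔ l + 1 ∈ T) then 1 else -1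

/-- The `m`-signature `σ(i,j)` of the edge path `(i,j)`. -/
def mSignature (N m i j : ℕ) : ℤ :=
  ∑ T ∈ Finset.powersetCard m (Finset.Icc 1 N), ∏ l ∈ Finset.Icc i j, edgeSign T l

lemma prod_edgeSign (T : Finset ℕ) (i : ℕ) : ∀ j, i ≤ j →
    ∏ l ∈ Finset.Icc i j, edgeSign T l = if (i ∈ T ↔ j + 1 ∈ T) then 1 else -1 := by
  intro j hj
  induction j, hj using Nat.le_induction with
  | base => simp [edgeSign]
  | succ j hj ih =>
    rw [← Finset.insert_Icc_right_eq_Icc_add_one (le_trans hj (Nat.le_succ j)),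
      Finset.prod_insert (by simp), ih]
    by_cases h1 : i ∈ T <;> by_cases h2 : (j + 1) ∈ T <;> by_cases h3 : (j + 2) ∈ T <;>
      simp [edgeSign, h1, h2, h3, show j + 1 + 1 = j + 2 from rfl]

lemma swap_mem {s : Finset ℕ} {u v x : ℕ} (hu : u ∈ s) (hv : v ∈ s) (hx : x ∈ s) :
    Equiv.swap u v x ∈ s := by
  rcases eq_or_ne x u with rfl | h1
  · simpa using hv
  rcases eq_or_ne x v with rfl | h2
  · simpa using hu
  · rwa [Equiv.swap_apply_of_ne_of_ne h1 h2]

lemma sum_sign2_eq (N m : ℕ) {a b a' b' : ℕ}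
    (ha : a ∈ Finset.Icc 1 N) (hb : b ∈ Finset.Icc 1 N)
    (ha' : a' ∈ Finset.Icc 1 N) (hb' : b' ∈ Finset.Icc 1 N)
    (hab : a ≠ b) (hab' : a' ≠ b') :
    ∑ T ∈ Finset.powersetCard m (Finset.Icc 1 N), (if (a ∈ T ↔ b ∈ T) then (1:ℤ) else -1)
    = ∑ T ∈ Finset.powersetCard m (Finset.Icc 1 N),
        (if (a' ∈ T ↔ b' ∈ T) then (1:ℤ) else -1) := by
  set c : ℕ := Equiv.swap a a' b with hc
  set π : Equiv.Perm ℕ := (Equiv.swap a a').trans (Equiv.swap c b') with hπ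
  have hcmem : c ∈ Finset.Icc 1 N := swap_mem ha ha' hb
  have hπmem : ∀ x ∈ Finset.Icc 1 N, π x ∈ Finset.Icc 1 N := by
    intro x hx
    exact swap_mem hcmem hb' (swap_mem ha ha' hx)
  have hπa : π a = a' := by
    have hca' : a' ≠ c := by
      rw [hc]
      rcases eq_or_ne b a' with rfl | h
      · rw [Equiv.swap_apply_right]; exact Ne.symm hab
      · rcases eq_or_ne a a' with rfl | h2
        · simpa using hab
        · rw [Equiv.swap_apply_of_ne_of_ne (Ne.symm hab) h]; exact Ne.symm h
    simp only [hπ, Equiv.trans_apply, Equiv.swap_apply_left]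
    exact Equiv.swap_apply_of_ne_of_ne hca' hab'
  have hπb : π b = b' := by
    simp only [hπ, Equiv.trans_apply, ← hc, Equiv.swap_apply_left]
  refine Finset.sum_nbij' (fun T => T.map π.toEmbedding)
    (fun T => T.map π.symm.toEmbedding) ?_ ?_ ?_ ?_ ?_
  · intro T hT
    rw [Finset.mem_powersetCard] at hT ⊢
    refine ⟨?_, by rw [Finset.card_map]; exact hT.2⟩
    intro x hx
    rw [Finset.mem_map] at hx
    obtain ⟨y, hy, rfl⟩ := hx
    exact hπmem y (hT.1 hy)
  · intro T hT
    rw [Finset.mem_powersetCard] at hT ⊢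
    refine ⟨?_, by rw [Finset.card_map]; exact hT.2⟩
    intro x hx
    rw [Finset.mem_map] at hx
    obtain ⟨y, hy, rfl⟩ := hx
    have : π.symm y ∈ Finset.Icc 1 N := by
      simp only [hπ, Equiv.symm_trans_apply, Equiv.symm_swap]
      exact swap_mem ha ha' (swap_mem hcmem hb' (hT.1 hy))
    exact this
  · intro T hT; ext x; simp [Finset.mem_map_equiv]
  · intro T hT; ext x; simp [Finset.mem_map_equiv]
  · intro T hT
    have h1 : a' ∈ T.map π.toEmbedding ↔ a ∈ T := by
      rw [← hπa]; exact Finset.mem_map' π.toEmbedding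
    have h2 : b' ∈ T.map π.toEmbedding ↔ b ∈ T := by
      rw [← hπb]; exact Finset.mem_map' π.toEmbedding
    simp only [h1, h2]

/-- For `1 ≤ m ≤ n`, `N = m + n`, the `m`-signature of an edge path is independent of
the path: for any two edge paths `(i,j)` and `(i′,j′)` with `1 ≤ i ≤ j ≤ N−1` and
`1 ≤ i′ ≤ j′ ≤ N−1`, one has `σ(i,j) = σ(i′,j′)`. -/
theorem mSignature_independent_of_path (m n : ℕ) (hm : 1 ≤ m) (hmn : m ≤ n)
    (i j i' j' : ℕ) (hi : 1 ≤ i) (hij : i ≤ j) (hj : j ≤ m + n - 1)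
    (hi' : 1 ≤ i') (hij' : i' ≤ j') (hj' : j' ≤ m + n - 1) :
    mSignature (m + n) m i j = mSignature (m + n) m i' j' := by
  have hN : 1 ≤ m + n := le_trans hm (Nat.le_add_right m n)
  have key : ∀ x y : ℕ, 1 ≤ x → x ≤ y → y ≤ m + n - 1 →
      x ∈ Finset.Icc 1 (m + n) ∧ y + 1 ∈ Finset.Icc 1 (m + n) ∧ x ≠ y + 1 := by
    intro x y hx hxy hy
    refine ⟨Finset.mem_Icc.2 ⟨hx, le_trans hxy (le_trans hy (Nat.sub_le _ _))⟩,
      Finset.mem_Icc.2 ⟨Nat.le_add_left 1 y, ?_⟩, by omega⟩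
    omega
  obtain ⟨h1, h2, h3⟩ := key i j hi hij hj
  obtain ⟨h1', h2', h3'⟩ := key i' j' hi' hij' hj'
  unfold mSignature
  rw [Finset.sum_congr rfl (fun T _ => prod_edgeSign T i j hij),
      Finset.sum_congr rfl (fun T _ => prod_edgeSign T i' j' hij')]
  exact sum_sign2_eq (m + n) m h1 h2 h1' h2' h3 h3'
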